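/- arXiv:2012.10070 — 7 statements merged into one kernel-verified Lean document; each statement's English description precedes it below -/
import Mathlib

section
/- For every graph G, the b-chromatic number of G is at most m(G), where m(G) = max{k : d_k ≥ k-1} for the non-increasing degree sequence d_1 ≥ d_2 ≥ ... ≥ d_n of G. -/
/-!
Every color class of a b-coloring with `k` colors contains a vertex with neighbors in all
`k - 1` other classes, hence of degree at least `k - 1`. One such vertex per class gives `k`
vertices of degree at least `k - 1`, so `k ≤ m(G)`.
-/

open SimpleGraph

/-- A proper coloring by natural number colors. -/
def IsProperNat {V : Type*} (G : SimpleGraph V) (c : V → ℕ) : Prop :=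
  ∀ ⦃v w⦄, G.Adj v w → c v ≠ c w

/-- A Grundy coloring of `G` with colors `1, …, k`: proper, every color used, and
every vertex of color `j` has a neighbor of each color `i < j`. -/
def IsGrundyColoring {V : Type*} (G : SimpleGraph V) (k : ℕ) (c : V → ℕ) : Prop :=
  (∀ v, c v ∈ Finset.Icc 1 k) ∧ IsProperNat G c ∧
  (∀ i ∈ Finset.Icc 1 k, ∃ v, c v = i) ∧
  (∀ v, ∀ i, 1 ≤ i → i < c v → ∃ w, G.Adj v w ∧ c w = i)

/-- The Grundy number: the maximum number of colors in a Grundy coloring. -/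
noncomputable def grundyNumber {V : Type*} (G : SimpleGraph V) : ℕ :=
  sSup {k | ∃ c : V → ℕ, IsGrundyColoring G k c}

/-- A color-dominating (b-)coloring with colors `1, …, k`: proper, and each color class
contains a vertex having neighbors in all the other color classes. -/
def IsBColoring {V : Type*} (G : SimpleGraph V) (k : ℕ) (c : V → ℕ) : Prop :=
  (∀ v, c v ∈ Finset.Icc 1 k) ∧ IsProperNat G c ∧
  (∀ i ∈ Finset.Icc 1 k, ∃ v, c v = i ∧
    ∀ j ∈ Finset.Icc 1 k, j ≠ i → ∃ w, G.Adj v w ∧ c w = j)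

/-- The b-chromatic number: the maximum number of colors in a b-coloring. -/
noncomputable def bChromatic {V : Type*} (G : SimpleGraph V) : ℕ :=
  sSup {k | ∃ c : V → ℕ, IsBColoring G k c}

/-- `m(G) = max {k : d_k ≥ k - 1}` for the non-increasing degree sequence; equivalently
the largest `k` such that `G` has `k` vertices of degree at least `k - 1`. -/
noncomputable def mParam {V : Type*} (G : SimpleGraph V) : ℕ :=
  sSup {k | ∃ s : Finset V, s.card = k ∧ ∀ v ∈ s, k - 1 ≤ (G.neighborSet v).ncard}

/-- A graph is b-monotone if the b-chromatic number of every induced subgraph is at most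
that of the graph itself. -/
def BMonotone {V : Type*} (G : SimpleGraph V) : Prop :=
  ∀ s : Set V, bChromatic (G.induce s) ≤ bChromatic G

def IsColorDominating {V : Type*} (G : SimpleGraph V) (k : ℕ) (c : V → ℕ) (v : V) : Prop :=
  ∀ j ∈ Finset.Icc 1 k, j ≠ c v → ∃ w, G.Adj v w ∧ c w = j

theorem IsColorDominating.pred_le_ncard_neighborSet {V : Type*} [Finite V] {G : SimpleGraph V}
    {k : ℕ} {c : V → ℕ} {v : V} (hv : IsColorDominating G k c v) :
    k - 1 ≤ (G.neighborSet v).ncard := by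
  have hsub : (↑((Finset.Icc 1 k).erase (c v)) : Set ℕ) ⊆ c '' G.neighborSet v := by
    intro j hj
    obtain ⟨hjv, hjk⟩ := Finset.mem_erase.mp hj
    exact hv j hjk hjv
  calc k - 1 = (Finset.Icc 1 k).card - 1 := by rw [Nat.card_Icc, Nat.add_sub_cancel]
    _ ≤ ((Finset.Icc 1 k).erase (c v)).card := Finset.pred_card_le_card_erase
    _ = (↑((Finset.Icc 1 k).erase (c v)) : Set ℕ).ncard := (Set.ncard_coe_finset _).symm
    _ ≤ (c '' G.neighborSet v).ncard := Set.ncard_le_ncard hsub ((Set.toFinite _).image c)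
    _ ≤ (G.neighborSet v).ncard := Set.ncard_image_le

theorem IsBColoring.exists_card_eq_isColorDominating {V : Type*} [Fintype V]
    {G : SimpleGraph V} {k : ℕ} {c : V → ℕ} (hc : IsBColoring G k c) :
    ∃ s : Finset V, s.card = k ∧ ∀ v ∈ s, IsColorDominating G k c v := by
  classical
  set D := Finset.univ.filter (IsColorDominating G k c)
  have hsurj : Set.SurjOn c D (Finset.Icc 1 k) := by
    intro i hi
    obtain ⟨v, rfl, hv⟩ := hc.2.2 i hi
    exact ⟨v, Finset.mem_filter.mpr ⟨Finset.mem_univ v, hv⟩, rfl⟩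
  have hk : k ≤ D.card := by
    simpa using Finset.card_le_card_of_surjOn c hsurj
  obtain ⟨s, hsD, hs⟩ := Finset.exists_subset_card_eq hk
  exact ⟨s, hs, fun v hv => (Finset.mem_filter.mp (hsD hv)).2⟩

theorem IsBColoring.le_mParam {V : Type*} [Fintype V] {G : SimpleGraph V} {k : ℕ}
    {c : V → ℕ} (hc : IsBColoring G k c) : k ≤ mParam G := by
  obtain ⟨s, hs, hdom⟩ := hc.exists_card_eq_isColorDominating
  have hbdd : BddAbove {n | ∃ t : Finset V, t.card = n ∧
      ∀ v ∈ t, n - 1 ≤ (G.neighborSet v).ncard} := by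
    refine ⟨Fintype.card V, ?_⟩
    rintro _ ⟨t, rfl, -⟩
    exact Finset.card_le_univ t
  exact le_csSup hbdd ⟨s, hs, fun v hv => (hdom v hv).pred_le_ncard_neighborSet⟩

/-- For every graph `G`, `b(G) ≤ m(G)`. -/
theorem bChromatic_le_mParam {V : Type*} [Fintype V] (G : SimpleGraph V) :
    bChromatic G ≤ mParam G :=
  csSup_le' fun _ ⟨_, hc⟩ => hc.le_mParam
end

section
/- For every graph G, the Grundy number of G is at most 2·m(G). -/
open SimpleGraph

/-
A vertex of color `j` in a Grundy coloring sees all colors `1, …, j - 1`, so it has degree at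
least `j - 1`. In a Grundy coloring with `k` colors, the vertices of the top `t = ⌈k / 2⌉`
colors are at least `t` in number (every color is used) and all have degree at least
`k - t ≥ t - 1`, so `m(G) ≥ ⌈k / 2⌉`.
-/

open Finset

namespace IsGrundyColoring

variable {V : Type*} {G : SimpleGraph V} {k : ℕ} {c : V → ℕ}

theorem sub_one_le_ncard_neighborSet (hc : IsGrundyColoring G k c) (v : V)
    (hfin : (G.neighborSet v).Finite) : c v - 1 ≤ (G.neighborSet v).ncard := by
  have hsub : Set.Icc 1 (c v - 1) ⊆ c '' G.neighborSet v := by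
    rintro i ⟨hi1, hi2⟩
    obtain ⟨w, hvw, rfl⟩ := hc.2.2.2 v i hi1 (by omega)
    exact ⟨w, hvw, rfl⟩
  calc c v - 1 = (Set.Icc 1 (c v - 1)).ncard := by simp
    _ ≤ (c '' G.neighborSet v).ncard := Set.ncard_le_ncard hsub (hfin.image c)
    _ ≤ (G.neighborSet v).ncard := Set.ncard_image_le hfin

end IsGrundyColoring

theorem le_mParam {V : Type*} [Fintype V] (G : SimpleGraph V) {s : Finset V} {t : ℕ}
    (hts : t ≤ #s) (hdeg : ∀ v ∈ s, t - 1 ≤ (G.neighborSet v).ncard) : t ≤ mParam G := by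
  obtain ⟨u, hus, rfl⟩ := exists_subset_card_eq hts
  refine le_csSup ⟨Fintype.card V, ?_⟩ ⟨u, rfl, fun v hv => hdeg v (hus hv)⟩
  rintro _ ⟨u', rfl, -⟩
  exact u'.card_le_univ

theorem IsGrundyColoring.le_two_mul_mParam {V : Type*} [Fintype V] {G : SimpleGraph V} {k : ℕ}
    {c : V → ℕ} (hc : IsGrundyColoring G k c) : k ≤ 2 * mParam G := by
  classical
  set t := (k + 1) / 2
  set s := univ.filter (fun v => k - t < c v)
  have htop : Ioc (k - t) k ⊆ s.image c := by
    intro i hi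
    rw [mem_Ioc] at hi
    obtain ⟨v, rfl⟩ := hc.2.2.1 i (by rw [mem_Icc]; omega)
    exact mem_image_of_mem c (by simpa [s] using hi.1)
  have hcard : t ≤ #s :=
    calc t = #(Ioc (k - t) k) := by rw [Nat.card_Ioc]; omega
      _ ≤ #(s.image c) := card_le_card htop
      _ ≤ #s := card_image_le
  have hdeg : ∀ v ∈ s, t - 1 ≤ (G.neighborSet v).ncard := by
    intro v hv
    have := hc.sub_one_le_ncard_neighborSet v (Set.toFinite _)
    simp only [s, mem_filter, mem_univ, true_and] at hv
    omega
  have := le_mParam G hcard hdeg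
  omega

/-- For every graph `G`, `Γ(G) ≤ 2 m(G)`. -/
theorem grundy_le_two_mParam {V : Type*} [Fintype V] (G : SimpleGraph V) :
    grundyNumber G ≤ 2 * mParam G :=
  csSup_le' fun _ ⟨_, hc⟩ => hc.le_two_mul_mParam
end

section
/- For any m ≥ 2 and n ≥ 1, the graph G_{m,n} obtained from the complete m-partite graph K_{n,...,n} (with parts B_1,...,B_m where B_i = {v_{i,1},...,v_{i,n}}) by deleting the edges of the n−1 cliques A_j = {v_{1,j},...,v_{m,j}} for j = 1,...,n−1 satisfies Γ(G_{m,n}) ≥ m + n − 1. -/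
open SimpleGraph

/-- The graph `G_{m,n}`: the complete `m`-partite graph with parts
`B_i = {v_{i,1}, …, v_{i,n}}` minus the edges of the cliques `A_j = {v_{1,j}, …, v_{m,j}}`
for `j = 1, …, n-1`.  Vertex `(i, j) : Fin m × Fin n` is `v_{i+1, j+1}`; so
`(i,j) ~ (i',j')` iff `i ≠ i'` and not (`j = j'` and `j+1 ≤ n-1`, i.e. `(j : ℕ) < n - 1`). -/
def Gmn (m n : ℕ) : SimpleGraph (Fin m × Fin n) where
  Adj a b := a.1 ≠ b.1 ∧ ¬ (a.2 = b.2 ∧ (a.2 : ℕ) < n - 1)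
  symm := by
    constructor
    rintro ⟨i, j⟩ ⟨i', j'⟩ ⟨h1, h2⟩
    refine ⟨h1.symm, fun hc => h2 ⟨hc.1.symm, ?_⟩⟩
    exact hc.1 ▸ hc.2
  loopless := by constructor; rintro ⟨i, j⟩ ⟨h, -⟩; exact h rfl

/-!
Colour the first `n - 1` layers `A_j` by `1, …, n - 1` (each is an independent set whose vertices
see every vertex of a lower layer in another part), and the last layer, an `m`-clique joined to
every vertex outside its own part, by `n, …, n + m - 1`. Every vertex of colour `j + 1` then sees
colours `1, …, j` in any other part and, on the last layer, the lower colours of that clique,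
so this is a Grundy colouring with `m + n - 1` colours.
-/

section GrundyNumber

variable {V : Type*} {G : SimpleGraph V} {k : ℕ} {c : V → ℕ}

theorem IsGrundyColoring.le_card [Fintype V] (h : IsGrundyColoring G k c) :
    k ≤ Fintype.card V := by
  have hsub : Finset.Icc 1 k ⊆ Finset.univ.image c := fun i hi ↦ by
    obtain ⟨v, rfl⟩ := h.2.2.1 i hi
    exact Finset.mem_image_of_mem c (Finset.mem_univ v)
  calc k = (Finset.Icc 1 k).card := by simp
    _ ≤ (Finset.univ.image c).card := Finset.card_le_card hsub
    _ ≤ Fintype.card V := Finset.card_image_le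

theorem IsGrundyColoring.le_grundyNumber [Finite V] (h : IsGrundyColoring G k c) :
    k ≤ grundyNumber G := by
  have := Fintype.ofFinite V
  exact le_csSup ⟨Fintype.card V, fun _ ⟨_, hc⟩ ↦ hc.le_card⟩ ⟨c, h⟩

end GrundyNumber

namespace Gmn

variable {m n : ℕ}

theorem adj_iff {a b : Fin m × Fin n} :
    (Gmn m n).Adj a b ↔ a.1 ≠ b.1 ∧ ¬(a.2 = b.2 ∧ (a.2 : ℕ) < n - 1) :=
  Iff.rfl

def grundyColoring (m n : ℕ) (v : Fin m × Fin n) : ℕ :=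
  if (v.2 : ℕ) < n - 1 then v.2 + 1 else n + v.1

theorem grundyColoring_of_lt {v : Fin m × Fin n} (h : (v.2 : ℕ) < n - 1) :
    grundyColoring m n v = v.2 + 1 :=
  if_pos h

theorem grundyColoring_of_last {v : Fin m × Fin n} (h : (v.2 : ℕ) = n - 1) :
    grundyColoring m n v = n + v.1 :=
  if_neg h.not_lt

theorem grundyColoring_mem_Icc (v : Fin m × Fin n) :
    grundyColoring m n v ∈ Finset.Icc 1 (m + n - 1) := by
  have := v.1.isLt
  have := v.2.isLt
  unfold grundyColoring
  split_ifs <;> simp only [Finset.mem_Icc] <;> omega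

theorem isProperNat_grundyColoring : IsProperNat (Gmn m n) (grundyColoring m n) := by
  rintro ⟨i, j⟩ ⟨i', j'⟩ ⟨hi, hj⟩
  rw [Ne, Fin.ext_iff] at hi
  rw [Fin.ext_iff] at hj
  have := j.isLt
  have := j'.isLt
  unfold grundyColoring
  split_ifs <;> omega

theorem grundyColoring_mk_pred (i : Fin m) {k : ℕ} (hk : 1 ≤ k) (hkn : k < n) :
    grundyColoring m n (i, ⟨k - 1, by omega⟩) = k := by
  rw [grundyColoring_of_lt (by simp only; omega)]
  simp only
  omega

theorem exists_grundyColoring_eq (hm : 1 ≤ m) (hn : 1 ≤ n) {k : ℕ}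
    (hk : k ∈ Finset.Icc 1 (m + n - 1)) : ∃ v, grundyColoring m n v = k := by
  rw [Finset.mem_Icc] at hk
  by_cases hkn : k < n
  · exact ⟨_, grundyColoring_mk_pred ⟨0, hm⟩ hk.1 hkn⟩
  · refine ⟨(⟨k - n, by omega⟩, ⟨n - 1, by omega⟩), ?_⟩
    rw [grundyColoring_of_last rfl]
    simp only
    omega

theorem exists_adj_grundyColoring_eq (hm : 2 ≤ m) (v : Fin m × Fin n) {k : ℕ} (hk : 1 ≤ k)
    (hkv : k < grundyColoring m n v) : ∃ w, (Gmn m n).Adj v w ∧ grundyColoring m n w = k := by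
  obtain ⟨i, j⟩ := v
  have := Fin.nontrivial_iff_two_le.2 hm
  obtain ⟨i', hi'⟩ := exists_ne i
  have := i.isLt
  have := j.isLt
  unfold grundyColoring at hkv
  dsimp only at hkv
  split_ifs at hkv with hj
  · refine ⟨(i', ⟨k - 1, by omega⟩), adj_iff.2 ⟨hi'.symm, ?_⟩,
      grundyColoring_mk_pred i' hk (by omega)⟩
    rw [Fin.ext_iff]
    simp only
    omega
  · by_cases hkn : k < n
    · exact ⟨(i', ⟨k - 1, by omega⟩), adj_iff.2 ⟨hi'.symm, by simp only; omega⟩,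
        grundyColoring_mk_pred i' hk hkn⟩
    · refine ⟨(⟨k - n, by omega⟩, j), adj_iff.2 ⟨?_, by simp only; omega⟩, ?_⟩
      · rw [Ne, Fin.ext_iff]
        simp only
        omega
      · rw [grundyColoring_of_last (by simp only; omega)]
        simp only
        omega

theorem isGrundyColoring_grundyColoring (hm : 2 ≤ m) (hn : 1 ≤ n) :
    IsGrundyColoring (Gmn m n) (m + n - 1) (grundyColoring m n) :=
  ⟨grundyColoring_mem_Icc, isProperNat_grundyColoring,
    fun _ hk ↦ exists_grundyColoring_eq (by omega) hn hk,
    fun v _ hk hkv ↦ exists_adj_grundyColoring_eq hm v hk hkv⟩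

end Gmn

/-- For `m ≥ 2`, `n ≥ 1`, `Γ(G_{m,n}) ≥ m + n - 1`. -/
theorem grundy_Gmn (m n : ℕ) (hm : 2 ≤ m) (hn : 1 ≤ n) :
    m + n - 1 ≤ grundyNumber (Gmn m n) :=
  (Gmn.isGrundyColoring_grundyColoring hm hn).le_grundyNumber
end

section
/- For any m ≥ 2 and n ≥ 1, the b-chromatic number of the graph G_{m,n} equals m. -/
open SimpleGraph

/-!
The rows `B_i` properly colour `G_{m,n}`, and the last vertex `v_{i,n}` of row `i` is adjacent to
every vertex outside its row. Whenever a proper colouring `C` by `ι` has such a vertex `u i` in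
each class, `b(G) = |ι|`: `C` itself is then a b-colouring, and in any b-colouring `c` the colours
`c (u i)` are pairwise distinct, while the class of `c (u i)` lies inside class `i` of `C`. A
b-dominating vertex `x` needs a neighbour of colour `c (u (C x))`, which would have to lie in the
independent class of `x`; so every colour is some `c (u i)`.
-/

namespace SimpleGraph.Coloring

variable {V ι : Type*} {G : SimpleGraph V}

def IsUniversalTransversal (C : G.Coloring ι) (u : ι → V) : Prop :=
  ∀ i w, C w ≠ i → G.Adj (u i) w

namespace IsUniversalTransversal

variable {C : G.Coloring ι} {u : ι → V}

theorem color_eq (hu : C.IsUniversalTransversal u) (i : ι) : C (u i) = i := by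
  by_contra h
  exact G.loopless.irrefl _ (hu i (u i) h)

theorem isBColoring [Fintype ι] (hu : C.IsUniversalTransversal u) :
    IsBColoring G (Fintype.card ι) (fun v => (Fintype.equivFin ι (C v) : ℕ) + 1) := by
  set e := Fintype.equivFin ι
  have color_u (a : ℕ) (ha : a < Fintype.card ι) :
      (e (C (u (e.symm ⟨a, ha⟩))) : ℕ) + 1 = a + 1 := by
    rw [hu.color_eq, e.apply_symm_apply]
  refine ⟨fun v => Finset.mem_Icc.2 ⟨Nat.le_add_left 1 _, (e (C v)).isLt⟩, fun v w hvw h => ?_, ?_⟩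
  · exact C.valid hvw (e.injective (Fin.ext (Nat.add_right_cancel h)))
  · intro i hi
    rw [Finset.mem_Icc] at hi
    refine ⟨u (e.symm ⟨i - 1, by omega⟩), by dsimp only; rw [color_u]; omega, fun j hj hji => ?_⟩
    rw [Finset.mem_Icc] at hj
    refine ⟨u (e.symm ⟨j - 1, by omega⟩), hu _ _ ?_, by dsimp only; rw [color_u]; omega⟩
    rw [hu.color_eq, ne_eq, e.symm.apply_eq_iff_eq, Fin.mk.injEq]
    omega

theorem le_card_of_isBColoring [Fintype ι] (hu : C.IsUniversalTransversal u) {k : ℕ}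
    {c : V → ℕ} (hc : IsBColoring G k c) : k ≤ Fintype.card ι := by
  obtain ⟨hrange, hproper, hdom⟩ := hc
  have class_subset (i : ι) (w : V) (hw : c w = c (u i)) : C w = i := by
    by_contra h
    exact hproper (hu i w h) hw.symm
  have injective : Function.Injective (c ∘ u) := fun i j hij => by
    by_contra h
    exact hproper (hu i (u j) (by rwa [hu.color_eq, ne_comm])) hij
  by_contra! hk
  obtain ⟨b, hb, hbu⟩ : ∃ b ∈ Finset.Icc 1 k, b ∉ Finset.univ.image (c ∘ u) :=
    Finset.exists_mem_notMem_of_card_lt_card (by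
      rwa [Finset.card_image_of_injective _ injective, Finset.card_univ, Nat.card_Icc,
        Nat.add_sub_cancel])
  obtain ⟨x, rfl, hx⟩ := hdom b hb
  have hne : c (u (C x)) ≠ c x := fun h => hbu (Finset.mem_image.2 ⟨C x, Finset.mem_univ _, h⟩)
  obtain ⟨w, hxw, hw⟩ := hx _ (hrange _) hne
  exact C.valid hxw (class_subset _ _ hw).symm

theorem bChromatic_eq_card [Fintype ι] (hu : C.IsUniversalTransversal u) :
    bChromatic G = Fintype.card ι :=
  have bound : Fintype.card ι ∈ upperBounds {k | ∃ c : V → ℕ, IsBColoring G k c} :=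
    fun _ ⟨_, hc⟩ => hu.le_card_of_isBColoring hc
  le_antisymm (csSup_le' bound) (le_csSup ⟨_, bound⟩ ⟨_, hu.isBColoring⟩)

end IsUniversalTransversal

end SimpleGraph.Coloring

def Gmn.rowColoring (m n : ℕ) : (Gmn m n).Coloring (Fin m) :=
  Coloring.mk Prod.fst fun h => h.1

theorem Gmn.rowColoring_isUniversalTransversal_last {m n : ℕ} (hn : 1 ≤ n) :
    (Gmn.rowColoring m n).IsUniversalTransversal fun i => (i, ⟨n - 1, by omega⟩) :=
  fun _ _ hw => ⟨hw.symm, fun h => lt_irrefl _ h.2⟩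

theorem bChromatic_Gmn_general (m n : ℕ) (hn : 1 ≤ n) :
    bChromatic (Gmn m n) = m := by
  rw [(Gmn.rowColoring_isUniversalTransversal_last hn).bChromatic_eq_card, Fintype.card_fin]

/-- For `m ≥ 2`, `n ≥ 1`, `b(G_{m,n}) = m`. -/
theorem bChromatic_Gmn (m n : ℕ) (hm : 2 ≤ m) (hn : 1 ≤ n) :
    bChromatic (Gmn m n) = m :=
  bChromatic_Gmn_general m n hn
end

section
/- In the tree atom T_k (k ≥ 2), with vertex degrees listed in non-increasing order d_1 ≥ d_2 ≥ ... ≥ d_n (n = 2^{k-1}), one has d_1 = k−1, and for every j with 1 < j ≤ n, d_j = k − ⌈log₂ j⌉. -/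
open SimpleGraph

/-- Vertex type of the tree atoms: `atomV n` has `2^n` vertices; `T_k` lives on `atomV (k-1)`. -/
def atomV : ℕ → Type
  | 0 => Unit
  | n + 1 => atomV n ⊕ atomV n

instance atomV.fintype : ∀ n, Fintype (atomV n)
  | 0 => inferInstanceAs (Fintype Unit)
  | n + 1 => by
    have := atomV.fintype n
    exact inferInstanceAs (Fintype (atomV n ⊕ atomV n))

/-- Adjacency of the tree atom: `T_{k+1}` is `T_k` together with a new leaf attached to
every vertex of `T_k`. -/
def atomAdj : (n : ℕ) → atomV n → atomV n → Prop
  | 0, _, _ => False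
  | n + 1, Sum.inl a, Sum.inl b => atomAdj n a b
  | _ + 1, Sum.inl a, Sum.inr b => a = b
  | _ + 1, Sum.inr a, Sum.inl b => a = b
  | _ + 1, Sum.inr _, Sum.inr _ => False

theorem atomAdj_symm : ∀ n (a b : atomV n), atomAdj n a b → atomAdj n b a
  | 0, _, _, h => h.elim
  | n + 1, Sum.inl a, Sum.inl b, h => atomAdj_symm n a b h
  | _ + 1, Sum.inl _, Sum.inr _, h => h.symm
  | _ + 1, Sum.inr _, Sum.inl _, h => h.symm
  | _ + 1, Sum.inr _, Sum.inr _, h => h.elim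

theorem atomAdj_irrefl : ∀ n (a : atomV n), ¬ atomAdj n a a
  | 0, _, h => h.elim
  | n + 1, Sum.inl a, h => atomAdj_irrefl n a h
  | _ + 1, Sum.inr _, h => h.elim

def atomGraph (n : ℕ) : SimpleGraph (atomV n) where
  Adj := atomAdj n
  symm := ⟨fun a b h => atomAdj_symm n a b h⟩
  loopless := ⟨fun a h => atomAdj_irrefl n a h⟩

/-- The tree atom `T_k` (for `k ≥ 1`), on `2^(k-1)` vertices. -/
def treeAtom (k : ℕ) : SimpleGraph (atomV (k - 1)) := atomGraph (k - 1)

/-!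
Passing from `T_{n+1}` to `T_{n+2}` adds one to the degree of every old vertex and gives each
of the `2^n` new leaves degree one. The multiset `{n - ⌊log₂ j⌋ : j < 2^n}` obeys the same
recursion, because `⌊log₂ j⌋ ≤ n` for `j < 2^n` (Mathlib's `Nat.log 2 0 = 0`) and
`⌊log₂ j⌋ = n` on `[2^n, 2^(n+1))`, so it is the degree multiset of `T_{n+1}`. An antitone
enumeration is determined by its multiset of values, and `j ↦ n - ⌊log₂ j⌋` is antitone;
finally `⌈log₂ (j + 1)⌉ = ⌊log₂ j⌋ + 1` for `j ≥ 1`.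
-/

lemma Nat.clog_add_one_eq_log_add_one {b m : ℕ} (hb : 1 < b) (hm : m ≠ 0) :
    Nat.clog b (m + 1) = Nat.log b m + 1 :=
  le_antisymm ((Nat.clog_le_iff_le_pow hb).2 (Nat.lt_pow_succ_log_self hb m))
    ((Nat.lt_clog_iff_pow_lt hb).2 (Nat.lt_succ_of_le (Nat.pow_log_le_self b hm)))

lemma Fin.univ_val_map_val (m : ℕ) :
    (Finset.univ : Finset (Fin m)).val.map Fin.val = Multiset.range m := by
  rw [Fin.univ_val_map, List.ofFn_eq_map, List.map_coe_finRange_eq_range]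
  rfl

lemma Fin.eq_of_antitone_of_map_univ_val_eq {α : Type*} [PartialOrder α] {m : ℕ}
    {f g : Fin m → α} (hf : Antitone f) (hg : Antitone g)
    (h : Finset.univ.val.map f = Finset.univ.val.map g) : f = g := by
  rw [Fin.univ_val_map, Fin.univ_val_map, Multiset.coe_eq_coe] at h
  exact List.ofFn_inj.mp <| h.eq_of_pairwise' (r := (· ≥ ·))
    (List.pairwise_ofFn.2 fun _ _ hij => hf hij.le) (List.pairwise_ofFn.2 fun _ _ hij => hg hij.le)

lemma map_range_two_pow_succ_sub_log (n : ℕ) :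
    (Multiset.range (2 ^ (n + 1))).map (fun j => n + 1 - Nat.log 2 j) =
      ((Multiset.range (2 ^ n)).map (fun j => n - Nat.log 2 j)).map (· + 1) +
        Multiset.replicate (2 ^ n) 1 := by
  rw [pow_succ, mul_two, Multiset.range_add, Multiset.map_add, Multiset.map_map, Multiset.map_map]
  congr 1
  · refine Multiset.map_congr rfl fun j hj => ?_
    have : Nat.log 2 j ≤ n :=
      (Nat.log_mono_right (Multiset.mem_range.1 hj).le).trans (Nat.log_pow one_lt_two n).le
    simp only [Function.comp_apply]
    omega
  · refine Multiset.eq_replicate.2 ⟨by simp, ?_⟩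
    simp only [Multiset.mem_map, Multiset.mem_range, Function.comp_apply]
    rintro _ ⟨j, hj, rfl⟩
    have : Nat.log 2 (2 ^ n + j) = n :=
      Nat.log_eq_of_pow_le_of_lt_pow (Nat.le_add_right _ _) (by rw [pow_succ]; omega)
    omega

namespace atomV

variable {n : ℕ}

def old (a : atomV n) : atomV (n + 1) := .inl a

def leaf (a : atomV n) : atomV (n + 1) := .inr a

lemma old_injective : Function.Injective (old : atomV n → atomV (n + 1)) := Sum.inl_injective

lemma leaf_injective : Function.Injective (leaf : atomV n → atomV (n + 1)) := Sum.inr_injective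

@[simp] lemma old_inj {a b : atomV n} : old a = old b ↔ a = b := old_injective.eq_iff

@[simp] lemma leaf_inj {a b : atomV n} : leaf a = leaf b ↔ a = b := leaf_injective.eq_iff

@[simp] lemma old_ne_leaf (a b : atomV n) : old a ≠ leaf b := Sum.inl_ne_inr

@[simp] lemma leaf_ne_old (a b : atomV n) : leaf a ≠ old b := Sum.inr_ne_inl

lemma forall_succ {p : atomV (n + 1) → Prop} : (∀ v, p v) ↔ (∀ a, p (old a)) ∧ ∀ a, p (leaf a) :=
  Sum.forall

lemma card_eq_two_pow : ∀ n, Fintype.card (atomV n) = 2 ^ n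
  | 0 => rfl
  | n + 1 => by
    rw [pow_succ, mul_two, ← card_eq_two_pow n]
    exact Fintype.card_sum

lemma univ_val_succ :
    (Finset.univ : Finset (atomV (n + 1))).val = Finset.univ.val.map old + Finset.univ.val.map leaf :=
  rfl

end atomV

namespace atomGraph

open atomV

variable {n : ℕ} {a b : atomV n}

@[simp] lemma adj_old_old : (atomGraph (n + 1)).Adj (old a) (old b) ↔ (atomGraph n).Adj a b := Iff.rfl

@[simp] lemma adj_old_leaf : (atomGraph (n + 1)).Adj (old a) (leaf b) ↔ a = b := Iff.rfl

@[simp] lemma adj_leaf_old : (atomGraph (n + 1)).Adj (leaf a) (old b) ↔ a = b := Iff.rfl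

@[simp] lemma not_adj_leaf_leaf : ¬ (atomGraph (n + 1)).Adj (leaf a) (leaf b) := id

lemma neighborSet_zero (v : atomV 0) : (atomGraph 0).neighborSet v = ∅ :=
  Set.eq_empty_of_forall_notMem fun _ h => h

lemma neighborSet_old (a : atomV n) :
    (atomGraph (n + 1)).neighborSet (old a) = insert (leaf a) (old '' (atomGraph n).neighborSet a) :=
  Set.ext <| forall_succ.2 ⟨fun b => by simp [old_injective.mem_set_image],
    fun b => by simp [eq_comm]⟩

lemma neighborSet_leaf (a : atomV n) :
    (atomGraph (n + 1)).neighborSet (leaf a) = {old a} :=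
  Set.ext <| forall_succ.2 ⟨fun b => by simp [eq_comm], fun b => by simp⟩

lemma ncard_neighborSet_old (a : atomV n) :
    ((atomGraph (n + 1)).neighborSet (old a)).ncard = ((atomGraph n).neighborSet a).ncard + 1 := by
  rw [neighborSet_old, Set.ncard_insert_of_notMem (by simp),
    Set.ncard_image_of_injective _ old_injective]

lemma ncard_neighborSet_leaf (a : atomV n) :
    ((atomGraph (n + 1)).neighborSet (leaf a)).ncard = 1 := by
  rw [neighborSet_leaf, Set.ncard_singleton]

end atomGraph

lemma atomGraph.map_univ_val_ncard_neighborSet : ∀ n,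
    Finset.univ.val.map (fun v => ((atomGraph n).neighborSet v).ncard) =
      (Multiset.range (2 ^ n)).map (fun j => n - Nat.log 2 j)
  | 0 => by simp [neighborSet_zero, atomV.card_eq_two_pow]
  | n + 1 => by
    rw [atomV.univ_val_succ, Multiset.map_add, Multiset.map_map, Multiset.map_map,
      map_range_two_pow_succ_sub_log, ← map_univ_val_ncard_neighborSet n, Multiset.map_map]
    simp [ncard_neighborSet_old, ncard_neighborSet_leaf, atomV.card_eq_two_pow]

/-- In `T_k` (`k ≥ 2`), for any non-increasing enumeration
`d 0 ≥ d 1 ≥ …` of the vertex degrees (`d i` is the degree `d_{i+1}` in 1-based terms),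
one has `d_1 = k - 1` and `d_j = k - ⌈log₂ j⌉` for `1 < j ≤ 2^(k-1)`. -/
theorem degreeSeq_treeAtom (k : ℕ)
    (e : Fin (2 ^ (k - 1)) ≃ atomV (k - 1))
    (d : Fin (2 ^ (k - 1)) → ℕ)
    (hd : ∀ i, d i = ((treeAtom k).neighborSet (e i)).ncard)
    (hmono : Antitone d) :
    d ⟨0, Nat.pow_pos (by norm_num)⟩ = k - 1 ∧
      ∀ j : Fin (2 ^ (k - 1)), 1 ≤ (j : ℕ) →
        d j = k - Nat.clog 2 ((j : ℕ) + 1) := by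
  have hdegrees : d = fun j : Fin (2 ^ (k - 1)) => k - 1 - Nat.log 2 j := by
    refine Fin.eq_of_antitone_of_map_univ_val_eq hmono
      (fun i j hij => Nat.sub_le_sub_left (Nat.log_mono_right hij) _) ?_
    calc Finset.univ.val.map d
        = (Finset.univ.val.map e).map (fun v => ((atomGraph (k - 1)).neighborSet v).ncard) := by
          rw [Multiset.map_map]; exact Multiset.map_congr rfl fun i _ => hd i
      _ = (Finset.univ.val.map Fin.val).map (fun j => k - 1 - Nat.log 2 j) := by
          rw [Multiset.map_univ_val_equiv, atomGraph.map_univ_val_ncard_neighborSet,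
            Fin.univ_val_map_val]
      _ = Finset.univ.val.map (fun j : Fin (2 ^ (k - 1)) => k - 1 - Nat.log 2 j) :=
          Multiset.map_map _ _ _
  refine ⟨by simp [hdegrees], fun j hj => ?_⟩
  rw [hdegrees, Nat.clog_add_one_eq_log_add_one one_lt_two (by omega), add_comm, ← Nat.sub_sub]
end

section
/- Every tree T satisfies Γ(T) − ⌊log₂(Γ(T)−1)⌋ ≤ b(T), when Γ(T) ≥ 2. -/
open SimpleGraph

/-!
A Grundy colouring of a tree with `k` colours greedily yields an embedded binomial tree `T_k`
whose vertex `j ≠ 0` has colour `k - 1 - ⌊log₂ j⌋` and whose root has colour `k`. Its first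
`m = k - ⌊log₂ (k - 1)⌋` vertices span a subtree `S` all of whose vertices have degree at
least `m - 1`. Label `S` by `1, …, m`. As the graph is a tree, a neighbour of `u ∈ S` outside
`S` is a child of `u` and of no other vertex of `S`, so `u` can give its outside neighbours the
labels missing from its neighbourhood; the rest of the tree is coloured top-down, avoiding the
colour of the parent. This is a b-colouring with `m` colours.
-/

open Set

namespace SimpleGraph.IsTree

variable {V : Type*} {G : SimpleGraph V} (hT : G.IsTree)

noncomputable def pathTo (r v : V) : G.Walk v r := (hT.existsUnique_path v r).exists.choose

lemma pathTo_isPath (r v : V) : (hT.pathTo r v).IsPath :=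
  (hT.existsUnique_path v r).exists.choose_spec

lemma eq_pathTo {r v : V} {p : G.Walk v r} (hp : p.IsPath) : p = hT.pathTo r v :=
  (hT.existsUnique_path v r).unique hp (hT.pathTo_isPath r v)

noncomputable def parent (r v : V) : V := (hT.pathTo r v).snd

noncomputable def depth (r v : V) : ℕ := (hT.pathTo r v).length

variable {r : V}

lemma parent_root : hT.parent r r = r := by
  rw [parent, ← hT.eq_pathTo Walk.IsPath.nil]
  rfl

lemma depth_parent_lt {v : V} (hv : v ≠ r) : hT.depth r (hT.parent r v) < hT.depth r v := by
  have htail : (hT.pathTo r v).tail = hT.pathTo r (hT.parent r v) :=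
    hT.eq_pathTo (hT.pathTo_isPath r v).tail
  rw [depth, depth, ← htail, ← Walk.length_tail_add_one (Walk.not_nil_of_ne hv)]
  exact Nat.lt_succ_self _

lemma parent_eq_or_parent_eq {x w : V} (hadj : G.Adj x w) :
    hT.parent r x = w ∨ hT.parent r w = x := by
  classical
  by_cases hw : w ∈ (hT.pathTo r x).support
  · left
    have hedge : (hT.pathTo r x).takeUntil w hw = Walk.cons hadj Walk.nil :=
      (hT.existsUnique_path x w).unique ((hT.pathTo_isPath r x).takeUntil hw)
        (by simp [hadj.ne])
    rw [parent, ← (hT.pathTo r x).take_spec hw, hedge]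
    simp
  · right
    have hp : (Walk.cons hadj.symm (hT.pathTo r x)).IsPath :=
      Walk.IsPath.cons (hT.pathTo_isPath r x) hw
    rw [parent, ← hT.eq_pathTo hp]
    simp

lemma parent_eq_of_adj {x w : V} (hadj : G.Adj x w) (hne : hT.parent r w ≠ x) :
    hT.parent r x = w :=
  (hT.parent_eq_or_parent_eq hadj).resolve_right hne

open Classical in
noncomputable def topDown (hT : G.IsTree) {α : Type*} (r : V) (a : α) (rule : V → α → α)
    (v : V) : α :=
  if _ : v = r then a else rule v (hT.topDown r a rule (hT.parent r v))
termination_by hT.depth r v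
decreasing_by exact hT.depth_parent_lt ‹_›

lemma topDown_root {α : Type*} (a : α) (rule : V → α → α) : hT.topDown r a rule r = a := by
  rw [topDown, dif_pos rfl]

lemma topDown_of_ne {α : Type*} (a : α) (rule : V → α → α) {v : V} (hv : v ≠ r) :
    hT.topDown r a rule v = rule v (hT.topDown r a rule (hT.parent r v)) := by
  rw [topDown, dif_neg hv]

end SimpleGraph.IsTree

section Cardinality

variable {α β : Type*}

lemma Set.exists_surjOn_of_encard_le [Nonempty α] {s : Set α} {t U : Set β} (ht : t.Finite)
    (hts : t.encard ≤ s.encard) (htU : t ⊆ U) (hU : U.Nonempty) :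
    ∃ f : α → β, SurjOn f s t ∧ ∀ x, f x ∈ U := by
  classical
  obtain ⟨g, hgt, hg⟩ := ht.exists_injOn_of_encard_le hts
  refine ⟨fun x => if h : ∃ y ∈ t, g y = x then h.choose else hU.some, fun y hy => ?_,
    fun x => ?_⟩
  · have h : ∃ y' ∈ t, g y' = g y := ⟨y, hy, rfl⟩
    refine ⟨g y, hgt hy, ?_⟩
    simp only [dif_pos h]
    exact hg h.choose_spec.1 hy h.choose_spec.2
  · dsimp only
    split_ifs with h
    · exact htU h.choose_spec.1
    · exact hU.some_mem

lemma le_natCard_of_forall_mem_Icc [Finite α] {c : α → ℕ} {k : ℕ}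
    (h : ∀ i ∈ Finset.Icc 1 k, ∃ v, c v = i) : k ≤ Nat.card α := by
  classical
  have := Fintype.ofFinite α
  have hs : SurjOn c (Finset.univ : Finset α) (Finset.Icc 1 k) := fun i hi =>
    (h i hi).imp fun v hv => ⟨Finset.mem_coe.2 (Finset.mem_univ v), hv⟩
  simpa [Nat.card_eq_fintype_card] using Finset.card_le_card_of_surjOn c hs

lemma encard_Ico_one (n : ℕ) : (Ico 1 n).encard = (n - 1 : ℕ) := by
  rw [← Finset.coe_Ico, encard_coe_eq_coe_finsetCard, Nat.card_Ico]

end Cardinality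

section Colorings

variable {V : Type*} {G : SimpleGraph V}

lemma bddAbove_setOf_isBColoring [Finite V] (G : SimpleGraph V) :
    BddAbove {k | ∃ c, IsBColoring G k c} :=
  ⟨Nat.card V, fun _ ⟨_, hc⟩ => le_natCard_of_forall_mem_Icc fun i hi => (hc.2.2 i hi).imp
    fun _ hv => hv.1⟩

lemma IsBColoring.le_bChromatic [Finite V] {k : ℕ} {c : V → ℕ} (hc : IsBColoring G k c) :
    k ≤ bChromatic G :=
  le_csSup (bddAbove_setOf_isBColoring G) ⟨c, hc⟩

lemma exists_isGrundyColoring_grundyNumber [Finite V] (h : grundyNumber G ≠ 0) :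
    ∃ c, IsGrundyColoring G (grundyNumber G) c := by
  have hne : {k | ∃ c, IsGrundyColoring G k c}.Nonempty := by
    by_contra hempty
    rw [not_nonempty_iff_eq_empty] at hempty
    exact h (by rw [grundyNumber, hempty, csSup_empty]; rfl)
  exact Nat.sSup_mem hne
    ⟨Nat.card V, fun _ ⟨_, hc⟩ => le_natCard_of_forall_mem_Icc hc.2.2.1⟩

lemma SimpleGraph.encard_le_encard_neighborSet {c : V → ℕ} {v : V} {C : Set ℕ}
    (hC : C ⊆ c '' G.neighborSet v) : C.encard ≤ (G.neighborSet v).encard :=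
  (encard_le_encard hC).trans (encard_image_le c _)

end Colorings

def altColor (q : ℕ) : ℕ := if q = 1 then 2 else 1

lemma altColor_ne (q : ℕ) : altColor q ≠ q := by
  unfold altColor; split_ifs <;> omega

lemma altColor_mem_Icc {m : ℕ} (hm : 2 ≤ m) (q : ℕ) : altColor q ∈ Icc 1 m := by
  unfold altColor; split_ifs <;> constructor <;> omega

lemma SimpleGraph.encard_diff_insert_neighborSet_le {V : Type*} {G : SimpleGraph V} {S : Set V}
    (hS : S.Finite) {u : V} (hu : u ∈ S) (hdeg : S.encard ≤ (G.neighborSet u).encard + 1) :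
    (S \ insert u (G.neighborSet u)).encard ≤ (G.neighborSet u \ S).encard := by
  have hle : (S \ {u}).encard ≤ (G.neighborSet u).encard := by
    rwa [← ENat.add_le_add_iff_right ENat.one_ne_top, encard_sdiff_singleton_add_one hu]
  rw [encard_le_encard_iff_encard_sdiff_le_encard_sdiff (hS.sdiff.inter_of_left _)] at hle
  calc (S \ insert u (G.neighborSet u)).encard = ((S \ {u}) \ G.neighborSet u).encard := by
        rw [sdiff_sdiff, singleton_union]
    _ ≤ (G.neighborSet u \ (S \ {u})).encard := hle
    _ ≤ (G.neighborSet u \ S).encard :=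
        encard_le_encard fun x ⟨hux, hx⟩ =>
          ⟨hux, fun hxS => hx ⟨hxS, (G.ne_of_adj hux).symm⟩⟩

section SubtreeColoring

variable {V : Type*} {G : SimpleGraph V} (hT : G.IsTree) (r : V) (S : Set V) (label : V → ℕ)
  (priv : V → V → ℕ)

noncomputable def subtreeColoring : V → ℕ :=
  open Classical in
  hT.topDown r (label r) fun x q =>
    if x ∈ S then label x else if hT.parent r x ∈ S then priv (hT.parent r x) x else altColor q

variable {hT r S label priv}

lemma subtreeColoring_of_mem {x : V} (hx : x ∈ S) :
    subtreeColoring hT r S label priv x = label x := by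
  by_cases hxr : x = r
  · subst hxr
    exact hT.topDown_root _ _
  · rw [subtreeColoring, hT.topDown_of_ne _ _ hxr, if_pos hx]

lemma subtreeColoring_of_parent_mem (hr : r ∈ S) {x : V} (hx : x ∉ S)
    (hxp : hT.parent r x ∈ S) :
    subtreeColoring hT r S label priv x = priv (hT.parent r x) x := by
  rw [subtreeColoring, hT.topDown_of_ne _ _ (ne_of_mem_of_not_mem hr hx).symm, if_neg hx,
    if_pos hxp]

lemma subtreeColoring_of_parent_notMem (hr : r ∈ S) {x : V} (hx : x ∉ S)
    (hxp : hT.parent r x ∉ S) :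
    subtreeColoring hT r S label priv x =
      altColor (subtreeColoring hT r S label priv (hT.parent r x)) := by
  rw [subtreeColoring, hT.topDown_of_ne _ _ (ne_of_mem_of_not_mem hr hx).symm, if_neg hx,
    if_neg hxp]

lemma subtreeColoring_mem_Icc {m : ℕ} (hm : 2 ≤ m) (hr : r ∈ S)
    (hlabel : MapsTo label S (Icc 1 m)) (hpriv : ∀ u ∈ S, ∀ x, priv u x ∈ Icc 1 m) (v : V) :
    subtreeColoring hT r S label priv v ∈ Icc 1 m := by
  by_cases hv : v ∈ S
  · rw [subtreeColoring_of_mem hv]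
    exact hlabel hv
  · by_cases hp : hT.parent r v ∈ S
    · rw [subtreeColoring_of_parent_mem hr hv hp]
      exact hpriv _ hp v
    · rw [subtreeColoring_of_parent_notMem hr hv hp]
      exact altColor_mem_Icc hm _

lemma isProperNat_subtreeColoring (hr : r ∈ S) (hS : ∀ x ∈ S, hT.parent r x ∈ S)
    (hlabel : InjOn label S) (hpriv : ∀ u ∈ S, ∀ x, priv u x ≠ label u) :
    IsProperNat G (subtreeColoring hT r S label priv) := by
  suffices h : ∀ x w, G.Adj x w → hT.parent r w = x →
      subtreeColoring hT r S label priv x ≠ subtreeColoring hT r S label priv w by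
    intro x w hxw
    rcases hT.parent_eq_or_parent_eq hxw with hx | hw
    · exact (h w x hxw.symm hx).symm
    · exact h x w hxw hw
  intro x w hxw hwx
  by_cases hw : w ∈ S
  · have hx : x ∈ S := hwx ▸ hS w hw
    rw [subtreeColoring_of_mem hx, subtreeColoring_of_mem hw]
    exact fun h => hxw.ne (hlabel hx hw h)
  · by_cases hx : x ∈ S
    · rw [subtreeColoring_of_parent_mem hr hw (hwx ▸ hx), subtreeColoring_of_mem hx, hwx]
      exact (hpriv x hx w).symm
    · rw [subtreeColoring_of_parent_notMem hr hw (hwx ▸ hx), hwx]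
      exact (altColor_ne _).symm

lemma exists_adj_subtreeColoring_eq (hr : r ∈ S) (hS : ∀ x ∈ S, hT.parent r x ∈ S)
    (hpriv : ∀ u ∈ S, SurjOn (priv u) (G.neighborSet u \ S)
      (label '' (S \ insert u (G.neighborSet u))))
    {u y : V} (hu : u ∈ S) (hy : y ∈ S) (hyu : y ≠ u) :
    ∃ w, G.Adj u w ∧ subtreeColoring hT r S label priv w = label y := by
  by_cases huy : G.Adj u y
  · exact ⟨y, huy, subtreeColoring_of_mem hy⟩
  obtain ⟨x, ⟨hux, hx⟩, hxy⟩ :=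
    hpriv u hu ⟨y, ⟨hy, by rintro (rfl | h) <;> contradiction⟩, rfl⟩
  have hxu : hT.parent r x = u :=
    hT.parent_eq_of_adj hux.symm fun h => hx (h ▸ hS u hu)
  refine ⟨x, hux, ?_⟩
  rw [subtreeColoring_of_parent_mem hr hx (hxu ▸ hu), hxu, hxy]

end SubtreeColoring

theorem le_bChromatic_of_parent_closed {V : Type*} [Finite V] {G : SimpleGraph V}
    (hT : G.IsTree) {r : V} {S : Finset V} (hr : r ∈ S) (hS : ∀ x ∈ S, hT.parent r x ∈ S)
    (h2 : 2 ≤ S.card) (hdeg : ∀ x ∈ S, (S.card : ℕ∞) ≤ (G.neighborSet x).encard + 1) :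
    S.card ≤ bChromatic G := by
  obtain ⟨label, hlabel⟩ : ∃ label : V → ℕ, BijOn label S (Icc 1 S.card) :=
    S.finite_toSet.exists_bijOn_of_encard_eq (by
      rw [← Finset.coe_Icc, encard_coe_eq_coe_finsetCard, encard_coe_eq_coe_finsetCard,
        Nat.card_Icc, Nat.add_sub_cancel])
  have : Nonempty V := ⟨r⟩
  have hpriv : ∀ u ∈ S, ∃ f : V → ℕ, SurjOn f (G.neighborSet u \ S)
      (label '' (S \ insert u (G.neighborSet u))) ∧ ∀ x, f x ∈ Icc 1 S.card \ {label u} :=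
    fun u hu => exists_surjOn_of_encard_le (S.finite_toSet.sdiff.image _)
      ((encard_image_le _ _).trans <| G.encard_diff_insert_neighborSet_le S.finite_toSet hu
        (by simpa using hdeg u hu))
      (image_subset_iff.2 fun y ⟨hy, hyu⟩ =>
        ⟨hlabel.mapsTo hy, fun h => hyu (.inl (hlabel.injOn hy hu h))⟩)
      ⟨_, altColor_mem_Icc h2 _, altColor_ne _⟩
  choose! priv hprivSurj hprivMem using hpriv
  refine IsBColoring.le_bChromatic (c := subtreeColoring hT r S label priv)
    ⟨fun v => ?_,
      isProperNat_subtreeColoring hr hS hlabel.injOn fun u hu x => (hprivMem u hu x).2,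
      fun i hi => ?_⟩
  · simpa using
      subtreeColoring_mem_Icc h2 hr hlabel.mapsTo (fun u hu x => (hprivMem u hu x).1) v
  · obtain ⟨y, hy, rfl⟩ := hlabel.surjOn (by simpa using hi)
    refine ⟨y, subtreeColoring_of_mem hy, fun j hj hji => ?_⟩
    obtain ⟨y', hy', rfl⟩ := hlabel.surjOn (by simpa using hj)
    exact exists_adj_subtreeColoring_eq hr hS hprivSurj hy hy' fun h => hji (h ▸ rfl)

def dropTopBit (j : ℕ) : ℕ := j - 2 ^ Nat.log 2 j

lemma dropTopBit_lt {j : ℕ} (hj : j ≠ 0) : dropTopBit j < j :=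
  Nat.sub_lt (Nat.pos_of_ne_zero hj) (Nat.two_pow_pos _)

lemma dropTopBit_add_two_pow_log {j : ℕ} (hj : j ≠ 0) : dropTopBit j + 2 ^ Nat.log 2 j = j :=
  Nat.sub_add_cancel (Nat.pow_log_le_self 2 hj)

lemma log_dropTopBit_lt {j : ℕ} (hj : dropTopBit j ≠ 0) :
    Nat.log 2 (dropTopBit j) < Nat.log 2 j := by
  refine Nat.log_lt_of_lt_pow hj ?_
  have := Nat.lt_pow_succ_log_self one_lt_two j
  rw [pow_succ] at this
  unfold dropTopBit at hj ⊢
  omega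

/-- The binomial tree `T_k` is encoded on `{0, …, 2^(k-1) - 1}` with root `0`, the parent of
`j ≠ 0` being `dropTopBit j`; `nb v i` stands for a neighbour of `v` of Grundy colour `i`. -/
def binomialEmbedding {V : Type*} (nb : V → ℕ → V) (r : V) (k j : ℕ) : V :=
  if _ : j = 0 then r else nb (binomialEmbedding nb r k (dropTopBit j)) (k - 1 - Nat.log 2 j)
termination_by j
decreasing_by exact dropTopBit_lt ‹_›

section BinomialEmbedding

variable {V : Type*} {G : SimpleGraph V} {c : V → ℕ} {nb : V → ℕ → V} {r : V} {k : ℕ}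

lemma binomialEmbedding_zero : binomialEmbedding nb r k 0 = r := by
  rw [binomialEmbedding, dif_pos rfl]

lemma binomialEmbedding_of_ne_zero {j : ℕ} (hj : j ≠ 0) :
    binomialEmbedding nb r k j =
      nb (binomialEmbedding nb r k (dropTopBit j)) (k - 1 - Nat.log 2 j) := by
  rw [binomialEmbedding, dif_neg hj]

lemma binomialEmbedding_spec
    (hnb : ∀ v i, 1 ≤ i → i < c v → G.Adj v (nb v i) ∧ c (nb v i) = i) (hr : c r = k)
    {j : ℕ} (hj0 : j ≠ 0) (hj : j < 2 ^ (k - 1)) :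
    G.Adj (binomialEmbedding nb r k (dropTopBit j)) (binomialEmbedding nb r k j) ∧
      c (binomialEmbedding nb r k j) = k - 1 - Nat.log 2 j ∧
      c (binomialEmbedding nb r k j) < c (binomialEmbedding nb r k (dropTopBit j)) := by
  induction j using Nat.strong_induction_on with
  | _ j ih =>
  have hlog : Nat.log 2 j < k - 1 := Nat.log_lt_of_lt_pow hj0 hj
  have hpar : k - 1 - Nat.log 2 j < c (binomialEmbedding nb r k (dropTopBit j)) := by
    by_cases h0 : dropTopBit j = 0
    · rw [h0, binomialEmbedding_zero, hr]
      omega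
    · rw [(ih _ (dropTopBit_lt hj0) h0 ((dropTopBit_lt hj0).trans hj)).2.1]
      have := log_dropTopBit_lt h0
      omega
  have hchild := hnb _ _ (by omega) hpar
  rw [binomialEmbedding_of_ne_zero hj0]
  exact ⟨hchild.1, hchild.2, by rw [hchild.2]; exact hpar⟩

lemma parent_binomialEmbedding (hT : G.IsTree)
    (hnb : ∀ v i, 1 ≤ i → i < c v → G.Adj v (nb v i) ∧ c (nb v i) = i) (hr : c r = k)
    {j : ℕ} (hj0 : j ≠ 0) (hj : j < 2 ^ (k - 1)) :
    hT.parent r (binomialEmbedding nb r k j) = binomialEmbedding nb r k (dropTopBit j) := by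
  induction j using Nat.strong_induction_on with
  | _ j ih =>
  obtain ⟨hadj, -, hlt⟩ := binomialEmbedding_spec hnb hr hj0 hj
  refine hT.parent_eq_of_adj hadj.symm fun h => ?_
  by_cases h0 : dropTopBit j = 0
  · rw [h0, binomialEmbedding_zero, hT.parent_root] at h
    rw [h0, binomialEmbedding_zero, ← h] at hlt
    exact lt_irrefl _ hlt
  · have hj' := (dropTopBit_lt hj0).trans hj
    rw [ih _ (dropTopBit_lt hj0) h0 hj'] at h
    have hlt' := (binomialEmbedding_spec hnb hr h0 hj').2.2
    rw [h] at hlt'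
    exact lt_asymm hlt hlt'

lemma injOn_binomialEmbedding (hT : G.IsTree)
    (hnb : ∀ v i, 1 ≤ i → i < c v → G.Adj v (nb v i) ∧ c (nb v i) = i) (hr : c r = k) :
    InjOn (binomialEmbedding nb r k) (Iio (2 ^ (k - 1))) := by
  intro a ha b hb hab
  induction a using Nat.strong_induction_on generalizing b with
  | _ a ih =>
  have hroot : ∀ j, j < 2 ^ (k - 1) → j ≠ 0 → binomialEmbedding nb r k j ≠ r := by
    intro j hj hj0 h
    have hcj := (binomialEmbedding_spec hnb hr hj0 hj).2.1
    rw [h, hr] at hcj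
    have := Nat.log_lt_of_lt_pow hj0 hj
    omega
  rcases eq_or_ne a 0 with rfl | ha0 <;> rcases eq_or_ne b 0 with rfl | hb0
  · rfl
  · exact absurd (hab.symm.trans binomialEmbedding_zero) (hroot b hb hb0)
  · exact absurd (hab.trans binomialEmbedding_zero) (hroot a ha ha0)
  · have hlog : Nat.log 2 a = Nat.log 2 b := by
      have hca := (binomialEmbedding_spec hnb hr ha0 ha).2.1
      have hcb := (binomialEmbedding_spec hnb hr hb0 hb).2.1
      have := Nat.log_lt_of_lt_pow ha0 ha
      have := Nat.log_lt_of_lt_pow hb0 hb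
      rw [hab] at hca
      omega
    have hdrop : dropTopBit a = dropTopBit b := by
      refine ih _ (dropTopBit_lt ha0) ((dropTopBit_lt ha0).trans ha)
        ((dropTopBit_lt hb0).trans hb) ?_
      rw [← parent_binomialEmbedding hT hnb hr ha0 ha,
        ← parent_binomialEmbedding hT hnb hr hb0 hb, hab]
    rw [← dropTopBit_add_two_pow_log ha0, ← dropTopBit_add_two_pow_log hb0, hdrop, hlog]

lemma le_encard_neighborSet_binomialEmbedding
    (hnb : ∀ v i, 1 ≤ i → i < c v → G.Adj v (nb v i) ∧ c (nb v i) = i) (hr : c r = k)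
    {j : ℕ} (hj : j < 2 ^ (k - 1)) :
    ((k - 1 - Nat.log 2 j : ℕ) : ℕ∞) ≤
      (G.neighborSet (binomialEmbedding nb r k j)).encard := by
  have hlow : ∀ v, Ico 1 (c v) ⊆ c '' G.neighborSet v :=
    fun v i ⟨hi1, hi2⟩ => ⟨nb v i, (hnb v i hi1 hi2).1, (hnb v i hi1 hi2).2⟩
  rcases eq_or_ne j 0 with rfl | hj0
  · have := G.encard_le_encard_neighborSet (hlow (binomialEmbedding nb r k 0))
    rw [encard_Ico_one, binomialEmbedding_zero, hr] at this
    rwa [binomialEmbedding_zero, Nat.log_zero_right, Nat.sub_zero]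
  · obtain ⟨hadj, hcv, hlt⟩ := binomialEmbedding_spec hnb hr hj0 hj
    have hdeg := G.encard_le_encard_neighborSet (insert_subset ⟨_, hadj.symm, rfl⟩ (hlow _))
    rw [encard_insert_of_notMem fun h => (Set.mem_Ico.1 h).2.not_ge hlt.le, encard_Ico_one]
      at hdeg
    have := Nat.log_lt_of_lt_pow hj0 hj
    calc ((k - 1 - Nat.log 2 j : ℕ) : ℕ∞)
        = ((c (binomialEmbedding nb r k j) - 1 : ℕ) : ℕ∞) + 1 := by norm_cast; omega
      _ ≤ _ := hdeg

end BinomialEmbedding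

theorem IsGrundyColoring.exists_parent_closed {V : Type*} {G : SimpleGraph V} {k : ℕ}
    {c : V → ℕ} (hc : IsGrundyColoring G k c) (hT : G.IsTree) (hk : k ≠ 0) :
    ∃ r, ∃ S : Finset V, r ∈ S ∧ (∀ x ∈ S, hT.parent r x ∈ S) ∧
      S.card = k - Nat.log 2 (k - 1) ∧
      ∀ x ∈ S, (S.card : ℕ∞) ≤ (G.neighborSet x).encard + 1 := by
  classical
  obtain ⟨r, hr⟩ := hc.2.2.1 k (Finset.mem_Icc.2 ⟨Nat.one_le_iff_ne_zero.2 hk, le_rfl⟩)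
  have : Nonempty V := ⟨r⟩
  choose! nb hnb using hc.2.2.2
  set m := k - Nat.log 2 (k - 1)
  have hmk : m ≤ k := Nat.sub_le _ _
  have hm : m ≤ 2 ^ (k - 1) := hmk.trans (by have := Nat.lt_two_pow_self (n := k - 1); omega)
  have hm0 : 0 < m := by have := Nat.log_le_self 2 (k - 1); omega
  have hinj : InjOn (binomialEmbedding nb r k) (Finset.range m) :=
    (injOn_binomialEmbedding hT hnb hr).mono fun j hj => (Finset.mem_range.1 hj).trans_le hm
  have hcard : ((Finset.range m).image (binomialEmbedding nb r k)).card = m := by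
    rw [Finset.card_image_of_injOn hinj, Finset.card_range]
  refine ⟨r, (Finset.range m).image (binomialEmbedding nb r k),
    Finset.mem_image.2 ⟨0, Finset.mem_range.2 hm0, binomialEmbedding_zero⟩, ?_, hcard, ?_⟩
  · simp only [Finset.mem_image, Finset.mem_range]
    rintro _ ⟨j, hj, rfl⟩
    rcases eq_or_ne j 0 with rfl | hj0
    · exact ⟨0, hj, by rw [binomialEmbedding_zero, hT.parent_root]⟩
    · exact ⟨dropTopBit j, (dropTopBit_lt hj0).trans hj,
        (parent_binomialEmbedding hT hnb hr hj0 (hj.trans_le hm)).symm⟩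
  · simp only [hcard, Finset.mem_image, Finset.mem_range]
    rintro _ ⟨j, hj, rfl⟩
    have hlog : Nat.log 2 j ≤ Nat.log 2 (k - 1) := Nat.log_mono_right (by omega)
    calc (m : ℕ∞) ≤ ((k - 1 - Nat.log 2 j : ℕ) : ℕ∞) + 1 := by norm_cast; omega
      _ ≤ _ := by gcongr; exact le_encard_neighborSet_binomialEmbedding hnb hr (hj.trans_le hm)

/-- every tree `T` with `Γ(T) ≥ 2` satisfies
`Γ(T) - ⌊log₂ (Γ(T) - 1)⌋ ≤ b(T)`. -/
theorem tree_grundy_le_bChromatic {V : Type*} [Fintype V] (G : SimpleGraph V)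
    (hT : G.IsTree) (h2 : 2 ≤ grundyNumber G) :
    grundyNumber G - Nat.log 2 (grundyNumber G - 1) ≤ bChromatic G := by
  obtain ⟨c, hc⟩ := exists_isGrundyColoring_grundyNumber (G := G) (by omega)
  obtain ⟨r, S, hr, hS, hcard, hdeg⟩ := hc.exists_parent_closed hT (by omega)
  have hlog : Nat.log 2 (grundyNumber G - 1) < grundyNumber G - 1 := Nat.log_lt_self 2 (by omega)
  rw [← hcard]
  exact le_bChromatic_of_parent_closed hT hr hS (by omega) hdeg
end

section
/- For every t ≥ 2, the graph G_t obtained by taking a complete graph K_t on vertices v_1,...,v_t and attaching to each v_i a disjoint copy K(v_i) of K_t by identifying v_i with one of its vertices, satisfies Γ(G_t) = 2t − 1 and b(G_t) = t. Moreover G_t contains no induced K_4 minus an edge and no induced C_4. -/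
/-!
Upper bounds: a vertex of colour `k` in a Grundy colouring sees the `k - 1` smaller colours, so
`Γ ≤ Δ + 1 = 2t - 1`; the dominating vertices of a b-colouring with `k` colours are `k`
vertices of degree at least `k - 1`, and for `k > t` only the `t` central vertices qualify.
Lower bounds: colour the `j`-th vertex of `K(v_i)` by `j` and `v_i` by `t + i` (Grundy), or
`(i, j)` by `i + j mod t` (b-colouring, dominated from the central vertices).
Two nonadjacent vertices of `G_t` have at most one common neighbour, whereas `K₄ - e` and `C₄`
both contain two nonadjacent vertices with two common neighbours.
-/

open SimpleGraph

/-- `K₄` minus one edge. -/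
def K4minusE : SimpleGraph (Fin 4) := (completeGraph (Fin 4)).deleteEdges {s(0, 1)}

/-- The cycle on four vertices. -/
def C4 : SimpleGraph (ZMod 4) := SimpleGraph.fromRel (fun i j => j = i + 1)

/-- The graph `G_t`: a central clique on `(i, 0)`, `i : Fin t`, together with, for each
`i`, a clique `K(v_i)` on `{(i, j) : j : Fin t}` (identifying `v_i = (i, 0)`). -/
def Gt (t : ℕ) : SimpleGraph (Fin t × Fin t) where
  Adj a b := ((a.2 : ℕ) = 0 ∧ (b.2 : ℕ) = 0 ∧ a.1 ≠ b.1) ∨ (a.1 = b.1 ∧ a.2 ≠ b.2)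
  symm := by
    constructor
    rintro ⟨i, j⟩ ⟨i', j'⟩ (⟨h1, h2, h3⟩ | ⟨h1, h2⟩)
    · exact Or.inl ⟨h2, h1, h3.symm⟩
    · exact Or.inr ⟨h1.symm, h2.symm⟩
  loopless := by constructor; rintro ⟨i, j⟩ (⟨-, -, h⟩ | ⟨-, h⟩) <;> exact h rfl

section Coloring

variable {V : Type*} {G : SimpleGraph V} {k : ℕ} {c : V → ℕ}

open Finset

lemma card_le_degree_of_forall_exists_adj [G.LocallyFinite] {v : V} {S : Finset ℕ}
    (hS : ∀ i ∈ S, ∃ w, G.Adj v w ∧ c w = i) : #S ≤ G.degree v := by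
  classical
  calc #S ≤ #((G.neighborFinset v).image c) :=
        card_le_card fun i hi => by
          obtain ⟨w, hvw, rfl⟩ := hS i hi
          exact mem_image_of_mem c ((G.mem_neighborFinset v w).2 hvw)
    _ ≤ G.degree v := card_image_le

lemma IsGrundyColoring.exists_le_degree_add_one [G.LocallyFinite]
    (hc : IsGrundyColoring G k c) (hk : 0 < k) : ∃ v, k ≤ G.degree v + 1 := by
  obtain ⟨v, hv⟩ := hc.2.2.1 k (mem_Icc.2 ⟨hk, le_rfl⟩)
  have hcard : #(Icc 1 (k - 1)) ≤ G.degree v :=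
    card_le_degree_of_forall_exists_adj fun i hi =>
      hc.2.2.2 v i (mem_Icc.1 hi).1 (by have := (mem_Icc.1 hi).2; omega)
  rw [Nat.card_Icc] at hcard
  exact ⟨v, by omega⟩

lemma IsBColoring.le_card_filter_degree [Fintype V] [DecidableRel G.Adj]
    (hc : IsBColoring G k c) : k ≤ #{v | k - 1 ≤ G.degree v} := by
  have hcolors : #(Icc 1 k) ≤ #{v | k - 1 ≤ G.degree v} := by
    refine card_le_card_of_surjOn c fun i hi => ?_
    obtain ⟨v, hvi, hdom⟩ := hc.2.2 i hi
    have hcard : #((Icc 1 k).erase i) ≤ G.degree v :=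
      card_le_degree_of_forall_exists_adj fun j hj =>
        hdom j (mem_of_mem_erase hj) (ne_of_mem_erase hj)
    rw [card_erase_of_mem hi, Nat.card_Icc] at hcard
    exact ⟨v, by simpa using hcard, hvi⟩
  simpa using hcolors

end Coloring

lemma isEmpty_embedding_of_commonNeighbors_subsingleton {W V : Type*} {H : SimpleGraph W}
    {G : SimpleGraph V}
    (hG : ∀ a b, a ≠ b → ¬G.Adj a b → (G.commonNeighbors a b).Subsingleton)
    {a b : W} (hab : a ≠ b) (hnadj : ¬H.Adj a b) (hH : ¬(H.commonNeighbors a b).Subsingleton) :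
    IsEmpty (H ↪g G) := by
  refine ⟨fun f => hH ?_⟩
  refine ((hG (f a) (f b) (f.injective.ne hab) (f.map_adj_iff.not.2 hnadj)).preimage
    f.injective).anti fun x hx => ?_
  simp only [mem_commonNeighbors] at hx ⊢
  exact ⟨f.map_adj_iff.2 hx.1, f.map_adj_iff.2 hx.2⟩

namespace Gt

open Finset

variable {t k : ℕ} {c : Fin t × Fin t → ℕ}

instance : DecidableRel (Gt t).Adj := fun a b => by unfold Gt; infer_instance

lemma adj_iff {a b : Fin t × Fin t} : (Gt t).Adj a b ↔
    ((a.2 : ℕ) = 0 ∧ (b.2 : ℕ) = 0 ∧ a.1 ≠ b.1) ∨ (a.1 = b.1 ∧ a.2 ≠ b.2) := Iff.rfl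

lemma neighborFinset_subset (v : Fin t × Fin t) :
    (Gt t).neighborFinset v ⊆ ({v.1} ×ˢ univ).erase v ∪ (univ ×ˢ {v.2}).erase v := by
  intro w hw
  rw [mem_neighborFinset] at hw
  have hwv : w ≠ v := hw.ne'
  rw [adj_iff] at hw
  simp only [mem_union, mem_erase, mem_product, mem_singleton, mem_univ, and_true, true_and]
  rcases hw with ⟨h0, h0', -⟩ | ⟨h1, -⟩
  · exact Or.inr ⟨hwv, Fin.ext (h0'.trans h0.symm)⟩
  · exact Or.inl ⟨hwv, h1.symm⟩

lemma degree_le (v : Fin t × Fin t) : (Gt t).degree v ≤ 2 * (t - 1) := by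
  calc (Gt t).degree v ≤ #(({v.1} ×ˢ univ).erase v ∪ (univ ×ˢ {v.2}).erase v) :=
        card_le_card (neighborFinset_subset v)
    _ ≤ #(({v.1} ×ˢ univ).erase v) + #((univ ×ˢ {v.2}).erase v) := card_union_le _ _
    _ = 2 * (t - 1) := by
      rw [card_erase_of_mem (by simp), card_erase_of_mem (by simp)]
      simp only [card_product, card_singleton, card_univ, Fintype.card_fin]
      omega

lemma degree_le_of_ne_zero {v : Fin t × Fin t} (hv : (v.2 : ℕ) ≠ 0) :
    (Gt t).degree v ≤ t - 1 := by
  have hsub : (Gt t).neighborFinset v ⊆ ({v.1} ×ˢ univ).erase v := fun w hw => by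
    rw [mem_neighborFinset, adj_iff] at hw
    rcases hw with ⟨h0, -⟩ | ⟨h1, h2⟩
    · exact absurd h0 hv
    · simp [h1, Prod.ext_iff, h2.symm]
  calc (Gt t).degree v ≤ #(({v.1} ×ˢ univ).erase v) := card_le_card hsub
    _ = t - 1 := by rw [card_erase_of_mem (by simp)]; simp

lemma commonNeighbors_subsingleton {a b : Fin t × Fin t} (hab : a ≠ b)
    (hnadj : ¬(Gt t).Adj a b) :
    ((Gt t).commonNeighbors a b).Subsingleton := by
  intro x hx y hy
  simp only [mem_commonNeighbors, adj_iff] at hx hy hnadj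
  simp only [ne_eq, Prod.ext_iff, Fin.ext_iff] at hab hx hy hnadj ⊢
  omega

def grundyColoring (t : ℕ) (v : Fin t × Fin t) : ℕ :=
  if (v.2 : ℕ) = 0 then t + v.1 else v.2

lemma isGrundyColoring_grundyColoring :
    IsGrundyColoring (Gt t) (2 * t - 1) (grundyColoring t) := by
  refine ⟨fun v => ?_, fun v w hvw => ?_, fun i hi => ?_, fun v i hi hiv => ?_⟩
  · have := v.1.isLt; have := v.2.isLt
    simp only [grundyColoring, mem_Icc]
    split_ifs <;> omega
  · have := v.2.isLt; have := w.2.isLt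
    simp only [adj_iff, ne_eq, Fin.ext_iff] at hvw
    simp only [grundyColoring]
    split_ifs <;> omega
  · rw [mem_Icc] at hi
    by_cases hit : i < t
    · exact ⟨(⟨0, by omega⟩, ⟨i, hit⟩),
        by simp [grundyColoring, show i ≠ 0 by omega]⟩
    · refine ⟨(⟨i - t, by omega⟩, ⟨0, by omega⟩), ?_⟩
      simp only [grundyColoring, ↓reduceIte]
      omega
  · have := v.1.isLt; have := v.2.isLt
    simp only [grundyColoring] at hiv
    by_cases hit : i < t
    · refine ⟨(v.1, ⟨i, hit⟩), Or.inr ⟨rfl, ?_⟩,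
        by simp [grundyColoring, show i ≠ 0 by omega]⟩
      rw [ne_eq, Fin.ext_iff]
      dsimp only
      split_ifs at hiv <;> omega
    · have hv0 : (v.2 : ℕ) = 0 := by split_ifs at hiv <;> omega
      rw [if_pos hv0] at hiv
      refine ⟨(⟨i - t, by omega⟩, ⟨0, by omega⟩), Or.inl ⟨hv0, rfl, ?_⟩, ?_⟩
      · rw [ne_eq, Fin.ext_iff]; simp only; omega
      · simp only [grundyColoring, ↓reduceIte]; omega

def bColoring (t : ℕ) (v : Fin t × Fin t) : ℕ := (v.1 + v.2 : Fin t) + 1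

lemma isBColoring_bColoring : IsBColoring (Gt t) t (bColoring t) := by
  refine ⟨fun v => ?_, fun v w hvw => ?_, fun i hi => ?_⟩
  · exact mem_Icc.2 ⟨Nat.le_add_left _ _, (v.1 + v.2).isLt⟩
  · simp only [bColoring, ne_eq, add_left_inj, Fin.val_inj]
    rcases hvw with ⟨hv, hw, hne⟩ | ⟨h1, h2⟩
    · rwa [Fin.ext (hv.trans hw.symm), add_left_inj]
    · rwa [h1, add_right_inj]
  · rw [mem_Icc] at hi
    have : NeZero t := ⟨by omega⟩
    let a : Fin t := ⟨i - 1, by omega⟩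
    refine ⟨(a, 0), by simp only [bColoring, add_zero, a]; omega, fun j hj hji => ?_⟩
    rw [mem_Icc] at hj
    let b : Fin t := ⟨j - 1, by omega⟩
    have hba : b ≠ a := by simp only [ne_eq, Fin.ext_iff, b, a]; omega
    refine ⟨(a, b - a), Or.inr ⟨rfl, (sub_ne_zero.2 hba).symm⟩, ?_⟩
    simp only [bColoring, add_sub_cancel, b]
    omega

lemma le_two_mul_sub_one_of_isGrundyColoring (hc : IsGrundyColoring (Gt t) k c) :
    k ≤ 2 * t - 1 := by
  obtain rfl | hk := Nat.eq_zero_or_pos k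
  · exact Nat.zero_le _
  obtain ⟨v, hv⟩ := hc.exists_le_degree_add_one hk
  have := degree_le v
  have := v.1.isLt
  omega

lemma le_of_isBColoring (hc : IsBColoring (Gt t) k c) : k ≤ t := by
  by_contra! hkt
  have hcentral : ∀ v ∈ ({v | k - 1 ≤ (Gt t).degree v} : Finset _), (v.2 : ℕ) = 0 := by
    intro v hv
    by_contra hv0
    have := degree_le_of_ne_zero hv0
    simp only [mem_filter, mem_univ, true_and] at hv
    omega
  have hcard : #({v | k - 1 ≤ (Gt t).degree v} : Finset _) ≤ #(univ : Finset (Fin t)) :=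
    card_le_card_of_injOn Prod.fst (fun _ _ => mem_coe.2 (mem_univ _)) fun v hv w hw hvw =>
      Prod.ext hvw (Fin.ext ((hcentral v hv).trans (hcentral w hw).symm))
  have := hc.le_card_filter_degree
  simp only [card_univ, Fintype.card_fin] at hcard
  omega

end Gt

instance : DecidableRel K4minusE.Adj := fun a b => by unfold K4minusE; infer_instance

instance : DecidableRel C4.Adj := fun a b => by unfold C4; infer_instance

theorem Gt_properties_general (t : ℕ) :
    grundyNumber (Gt t) = 2 * t - 1 ∧ bChromatic (Gt t) = t ∧
      IsEmpty (K4minusE ↪g Gt t) ∧ IsEmpty (C4 ↪g Gt t) := by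
  have hGt : ∀ a b, a ≠ b → ¬(Gt t).Adj a b → ((Gt t).commonNeighbors a b).Subsingleton :=
    fun _ _ => Gt.commonNeighbors_subsingleton
  refine ⟨IsGreatest.csSup_eq ⟨⟨_, Gt.isGrundyColoring_grundyColoring⟩, ?_⟩,
    IsGreatest.csSup_eq ⟨⟨_, Gt.isBColoring_bColoring⟩, ?_⟩, ?_, ?_⟩
  · rintro k ⟨c, hc⟩
    exact Gt.le_two_mul_sub_one_of_isGrundyColoring hc
  · rintro k ⟨c, hc⟩
    exact Gt.le_of_isBColoring hc
  · refine isEmpty_embedding_of_commonNeighbors_subsingleton hGt (a := 0) (b := 1) (by decide)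
      (by decide) fun h => ?_
    exact absurd (h (x := 2) (by decide) (y := 3) (by decide)) (by decide)
  · refine isEmpty_embedding_of_commonNeighbors_subsingleton hGt (a := 0) (b := 2) (by decide)
      (by decide) fun h => ?_
    exact absurd (h (x := 1) (by decide) (y := 3) (by decide)) (by decide)

/-- `Γ(G_t) = 2t - 1`, `b(G_t) = t`, and `G_t` has no induced `K₄ - e`
and no induced `C₄`. -/
theorem Gt_properties (t : ℕ) (ht : 2 ≤ t) :
    grundyNumber (Gt t) = 2 * t - 1 ∧ bChromatic (Gt t) = t ∧
      IsEmpty (K4minusE ↪g Gt t) ∧ IsEmpty (C4 ↪g Gt t) :=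
  Gt_properties_general t
end
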